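/- Let (X,d,μ) be an unbounded metric measure space, a ∈ X, p > 1, and (Ẋ, d̂_a, μ̂_a) its sphericalization with dμ̂_a(x) = dμ(x)/(1+d(x,a))^{2p}. Let Ω ⊂ X be open, u: Ω → [-∞,∞], and g: Ω → [0,∞] measurable, and set ĝ(x) = g(x)(1+d(x,a))^2. Then g is a p-weak upper gradient of u in Ω with respect to (d,μ) if and only if ĝ is a p-weak upper gradient of u in Ω with respect to (d̂_a, μ̂_a). -/

import Mathlib

open MeasureTheory Metric Set ENNReal Filter

/-! With `φ = (1 + d(·,a))²` the sphericalized data are `ds̃ = φ⁻¹ ds` and `μ̂ₐ = φ^{-p} μ`.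
Hence `ρ ↦ ρ φ` is a bijection from the densities admissible for a curve family in `(X,d,μ)`
onto those admissible in the sphericalization, preserving line integrals and `p`-energy; so the
two moduli agree, exceptional families correspond, and `∫_γ g ds = ∫_γ g φ ds̃` on every curve. -/

/-- A (nonconstant, compact, rectifiable) curve with respect to a distance
function `D`, parameterized by arc length on `[0, len]`
(so that it is `1`-Lipschitz with respect to `D`). -/
structure CurveD (Y : Type*) (D : Y → Y → ℝ) where
  toFun : ℝ → Y
  len : ℝ
  len_pos : 0 < len
  lip : ∀ s ∈ Set.Icc (0:ℝ) len, ∀ t ∈ Set.Icc (0:ℝ) len, D (toFun s) (toFun t) ≤ |s - t|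

/-- The curve lies in the set `Ω`. -/
def CurveD.inSet {Y : Type*} {D : Y → Y → ℝ} (γ : CurveD Y D) (Ω : Set Y) : Prop :=
  ∀ t ∈ Set.Icc (0:ℝ) γ.len, γ.toFun t ∈ Ω

/-- Line integral `∫_γ ρ ds̃`, where the arc length element is `ds̃ = w ds`. -/
noncomputable def lineInt {Y : Type*} {D : Y → Y → ℝ} (γ : CurveD Y D) (ρ w : Y → ℝ≥0∞) : ℝ≥0∞ :=
  ∫⁻ t in Set.Icc (0:ℝ) γ.len, ρ (γ.toFun t) * w (γ.toFun t)

/-- The `p`-modulus of a curve family `Γ`, with energy measure `μ` and arc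
length weighted by `w`. -/
noncomputable def pMod {Y : Type*} [MeasurableSpace Y] {D : Y → Y → ℝ} (p : ℝ) (μ : Measure Y)
    (w : Y → ℝ≥0∞) (Γ : Set (CurveD Y D)) : ℝ≥0∞ :=
  ⨅ (ρ : Y → ℝ≥0∞) (_ : Measurable ρ) (_ : ∀ γ ∈ Γ, 1 ≤ lineInt γ ρ w), ∫⁻ y, ρ y ^ p ∂μ

/-- The absolute value of an extended real, as an element of `[0,∞]`. -/
noncomputable def eAbs (x : EReal) : ℝ≥0∞ :=
  if max x (-x) = (⊤ : EReal) then ⊤ else ENNReal.ofReal (max x (-x)).toReal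

/-- `g` is an upper gradient of `u : Ω → [-∞,∞]` (arc length weighted by `w`). -/
def IsUpperGradientOn {Y : Type*} (D : Y → Y → ℝ) (w : Y → ℝ≥0∞) (Ω : Set Y)
    (u : Y → EReal) (g : Y → ℝ≥0∞) : Prop :=
  ∀ γ : CurveD Y D, γ.inSet Ω →
    eAbs (u (γ.toFun γ.len) - u (γ.toFun 0)) ≤ lineInt γ g w

/-- `g` is a `p`-weak upper gradient of `u` in `Ω`: the upper gradient
inequality holds along `p`-almost every curve. -/
def IsPWUGOn {Y : Type*} [MeasurableSpace Y] (D : Y → Y → ℝ) (p : ℝ) (μ : Measure Y)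
    (w : Y → ℝ≥0∞) (Ω : Set Y) (u : Y → EReal) (g : Y → ℝ≥0∞) : Prop :=
  ∃ Γ₀ : Set (CurveD Y D), pMod p μ w Γ₀ = 0 ∧
    ∀ γ : CurveD Y D, γ.inSet Ω → γ ∉ Γ₀ →
      eAbs (u (γ.toFun γ.len) - u (γ.toFun 0)) ≤ lineInt γ g w

/-- `g` has locally finite `p`-energy in `Ω`. -/
def IsLocLp {Y : Type*} [MetricSpace Y] [MeasurableSpace Y] (p : ℝ) (μ : Measure Y)
    (Ω : Set Y) (g : Y → ℝ≥0∞) : Prop :=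
  ∀ x ∈ Ω, ∃ r > (0:ℝ), ∫⁻ y in Ω ∩ Metric.ball x r, g y ^ p ∂μ < ⊤

/-- `g` is the minimal `p`-weak upper gradient of `u` in `Ω`. -/
def IsMinimalPWUGOn {Y : Type*} [MetricSpace Y] [MeasurableSpace Y] (D : Y → Y → ℝ) (p : ℝ)
    (μ : Measure Y) (w : Y → ℝ≥0∞) (Ω : Set Y) (u : Y → EReal) (g : Y → ℝ≥0∞) : Prop :=
  IsPWUGOn D p μ w Ω u g ∧ IsLocLp p μ Ω g ∧
    ∀ h : Y → ℝ≥0∞, IsPWUGOn D p μ w Ω u h → IsLocLp p μ Ω h →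
      ∀ᵐ x ∂(μ.restrict Ω), g x ≤ h x

/-- The `p`-th power of the Newtonian norm of `u` on `Ω`. -/
noncomputable def NpNormP {Y : Type*} [MeasurableSpace Y] (D : Y → Y → ℝ) (p : ℝ)
    (μ : Measure Y) (w : Y → ℝ≥0∞) (Ω : Set Y) (u : Y → EReal) : ℝ≥0∞ :=
  (∫⁻ x in Ω, eAbs (u x) ^ p ∂μ) +
    ⨅ (g : Y → ℝ≥0∞) (_ : IsUpperGradientOn D w Ω u g), ∫⁻ x in Ω, g x ^ p ∂μ

/-- The Sobolev capacity of `E`. -/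
noncomputable def sobCap {Y : Type*} [MeasurableSpace Y] (D : Y → Y → ℝ) (p : ℝ)
    (μ : Measure Y) (w : Y → ℝ≥0∞) (E : Set Y) : ℝ≥0∞ :=
  ⨅ (u : Y → EReal) (_ : ∀ x ∈ E, 1 ≤ u x), NpNormP D p μ w Set.univ u

/-- The sphericalized arc length weight `ds̃ = ds/(1+d(x,a))²`. -/
noncomputable def hatW {X : Type*} [MetricSpace X] (a : X) : X → ℝ≥0∞ :=
  fun x => ENNReal.ofReal ((1 + dist x a) ^ 2)⁻¹

/-- The sphericalization measure `dμ̂ₐ = dμ/(1+d(x,a))^{2p}`. -/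
noncomputable def muHat {X : Type*} [MetricSpace X] [MeasurableSpace X] (μ : Measure X)
    (a : X) (p : ℝ) : Measure X :=
  μ.withDensity fun x => ENNReal.ofReal ((1 + dist x a) ^ (2 * p))⁻¹

/-- A `q`-Poincaré inequality for `(X,d,μ)`. -/
def PoincareIneqP {X : Type*} [MetricSpace X] [MeasurableSpace X] (q : ℝ) (μ : Measure X) : Prop :=
  ∃ C > (0:ℝ), ∃ lam ≥ (1:ℝ), ∀ (u : X → ℝ) (g : X → ℝ≥0∞), Measurable u → Measurable g →
    MeasureTheory.LocallyIntegrable u μ →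
    IsUpperGradientOn dist (fun _ => 1) Set.univ (fun x => (u x : EReal)) g →
    ∀ (x : X) (r : ℝ), 0 < r →
      ⨍⁻ y in Metric.ball x r, ENNReal.ofReal |u y - ⨍ z in Metric.ball x r, u z ∂μ| ∂μ ≤
        ENNReal.ofReal (C * Metric.diam (Metric.ball x r)) *
          (⨍⁻ y in Metric.ball x (lam * r), g y ^ q ∂μ) ^ (1/q)

/-- `μ` is doubling and all balls have positive finite measure. -/
def DoublingMeas {X : Type*} [MetricSpace X] [MeasurableSpace X] (μ : Measure X) : Prop :=
  (∀ (x : X) (r : ℝ), 0 < r → 0 < μ (Metric.ball x r) ∧ μ (Metric.ball x r) < ⊤) ∧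
    ∃ C > (0:ℝ), ∀ (x : X) (r : ℝ), 0 < r →
      μ (Metric.ball x (2 * r)) ≤ ENNReal.ofReal C * μ (Metric.ball x r)

/-- `μ` is Ahlfors `Q`-regular. -/
def AhlforsRegular {X : Type*} [MetricSpace X] [MeasurableSpace X] (μ : Measure X) (Q : ℝ) : Prop :=
  ∃ C > (0:ℝ), ∀ (x : X) (r : ℝ), 0 < r →
    ENNReal.ofReal (C⁻¹ * r ^ Q) ≤ μ (Metric.ball x r) ∧
      μ (Metric.ball x r) ≤ ENNReal.ofReal (C * r ^ Q)

section ChangeOfWeight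

variable {Y : Type*} {D : Y → Y → ℝ} {w φ : Y → ℝ≥0∞}

theorem lineInt_mul_eq_weight_mul (γ : CurveD Y D) (ρ : Y → ℝ≥0∞) :
    lineInt γ (fun y => ρ y * φ y) w = lineInt γ ρ (fun y => w y * φ y) :=
  lintegral_congr fun t => by simp only [mul_assoc, mul_comm (φ _)]

theorem lineInt_mul_mul_inv (γ : CurveD Y D) (ρ : Y → ℝ≥0∞) (hφ₀ : ∀ y, φ y ≠ 0)
    (hφ : ∀ y, φ y ≠ ⊤) :
    lineInt γ (fun y => ρ y * φ y) (fun y => w y * (φ y)⁻¹) = lineInt γ ρ w := by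
  simp only [lineInt_mul_eq_weight_mul, mul_assoc, ENNReal.inv_mul_cancel (hφ₀ _) (hφ _), mul_one]

variable [MeasurableSpace Y] {p : ℝ} {μ : Measure Y}

theorem lintegral_rpow_withDensity_inv_rpow (hp : 0 ≤ p) (hφ : Measurable φ) {ρ : Y → ℝ≥0∞}
    (hρ : Measurable ρ) :
    ∫⁻ y, ρ y ^ p ∂μ.withDensity (fun y => (φ y ^ p)⁻¹) = ∫⁻ y, (ρ y * (φ y)⁻¹) ^ p ∂μ := by
  rw [lintegral_withDensity_eq_lintegral_mul μ (by fun_prop) (by fun_prop)]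
  refine lintegral_congr fun y => ?_
  rw [Pi.mul_apply, ENNReal.mul_rpow_of_nonneg _ _ hp, ENNReal.inv_rpow, mul_comm]

theorem pMod_withDensity_inv_rpow (hp : 0 ≤ p) (hφ : Measurable φ) (hφ₀ : ∀ y, φ y ≠ 0)
    (hφ_top : ∀ y, φ y ≠ ⊤) (Γ : Set (CurveD Y D)) :
    pMod p (μ.withDensity fun y => (φ y ^ p)⁻¹) (fun y => w y * (φ y)⁻¹) Γ = pMod p μ w Γ := by
  refine le_antisymm (le_iInf₂ fun ρ hρ => le_iInf fun hadm => ?_)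
    (le_iInf₂ fun ρ hρ => le_iInf fun hadm => ?_)
  · refine iInf₂_le_of_le (fun y => ρ y * φ y) (hρ.mul hφ) (iInf_le_of_le ?_ ?_)
    · intro γ hγ
      rw [lineInt_mul_mul_inv γ ρ hφ₀ hφ_top]
      exact hadm γ hγ
    · rw [lintegral_rpow_withDensity_inv_rpow (ρ := fun y => ρ y * φ y) hp hφ (hρ.mul hφ)]
      simp only [mul_assoc, ENNReal.mul_inv_cancel (hφ₀ _) (hφ_top _), mul_one, le_rfl]
  · refine iInf₂_le_of_le (fun y => ρ y * (φ y)⁻¹) (hρ.mul hφ.inv) (iInf_le_of_le ?_ ?_)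
    · intro γ hγ
      rw [lineInt_mul_eq_weight_mul]
      exact hadm γ hγ
    · rw [lintegral_rpow_withDensity_inv_rpow hp hφ hρ]

theorem isPWUGOn_withDensity_inv_rpow_iff (hp : 0 ≤ p) (hφ : Measurable φ)
    (hφ₀ : ∀ y, φ y ≠ 0) (hφ_top : ∀ y, φ y ≠ ⊤) (Ω : Set Y) (u : Y → EReal) (g : Y → ℝ≥0∞) :
    IsPWUGOn D p (μ.withDensity fun y => (φ y ^ p)⁻¹) (fun y => w y * (φ y)⁻¹) Ω u
        (fun y => g y * φ y) ↔ IsPWUGOn D p μ w Ω u g := by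
  simp only [IsPWUGOn, pMod_withDensity_inv_rpow hp hφ hφ₀ hφ_top,
    lineInt_mul_mul_inv _ g hφ₀ hφ_top]

end ChangeOfWeight

section Sphericalization

variable {X : Type*} [MetricSpace X]

theorem hatW_eq_inv (a : X) :
    hatW a = fun x => (ENNReal.ofReal ((1 + dist x a) ^ 2))⁻¹ :=
  funext fun x => ENNReal.ofReal_inv_of_pos (by positivity)

theorem muHat_eq_withDensity_inv_rpow [MeasurableSpace X] (μ : Measure X) (a : X) (p : ℝ) :
    muHat μ a p = μ.withDensity fun x => (ENNReal.ofReal ((1 + dist x a) ^ 2) ^ p)⁻¹ := by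
  refine congrArg μ.withDensity (funext fun x => ?_)
  have hx : 0 < 1 + dist x a := by positivity
  rw [ENNReal.ofReal_rpow_of_pos (by positivity), ← Real.rpow_natCast, ← Real.rpow_mul hx.le,
    ENNReal.ofReal_inv_of_pos (Real.rpow_pos_of_pos hx _), Nat.cast_ofNat]

end Sphericalization

theorem pwug_sphericalization_invariant {X : Type*} [MetricSpace X] [MeasurableSpace X]
    [BorelSpace X] (μ : Measure X) (a : X) (p : ℝ) (hp : 1 < p)
    (Ω : Set X) (u : X → EReal) (g : X → ℝ≥0∞) :
    IsPWUGOn dist p μ (fun _ => 1) Ω u g ↔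
      IsPWUGOn dist p (muHat μ a p) (hatW a) Ω u
        (fun x => g x * ENNReal.ofReal ((1 + dist x a) ^ 2)) := by
  rw [muHat_eq_withDensity_inv_rpow, hatW_eq_inv]
  simpa only [one_mul] using (isPWUGOn_withDensity_inv_rpow_iff (w := fun _ => 1) (by linarith)
    (by fun_prop) (fun x => (ENNReal.ofReal_pos.2 (by positivity)).ne') (fun _ => ofReal_ne_top)
    Ω u g).symm
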